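/- Let p = (p_i)_{i≥0} be a probability distribution on ℕ₀ with mean at most 1, and let T be a rooted plane tree with π_p(T) = 0 (i.e., p_{i₀} = 0 for some degree i₀ occurring in T). Define η̂_p(T,T) := −Σ_{i∈D(T)} n_T(i)² ∏_{j∈D(T)} p_j^{n_T(j)−δ_{ij}} and γ̂_p(T,T) := 1 + η̂_p(T,T). Then γ̂_p(T,T) > 0 unless: (i) |T| = 1, or (ii) T is a path and p_1 = 1, or (iii) T is a star consisting of a root of degree d joined to d leaves and p_0 = 1. -/

import Mathlib

/-!
Since `π_p(T) = 0`, some degree `i₀ ∈ D(T)` has `p_{i₀} = 0`. Every summand of `η̂_p(T,T)` with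
`i ≠ i₀` still contains the factor `p_{i₀}^{n_T(i₀)}`, and the `i₀`-summand contains
`p_{i₀}^{n_T(i₀) - 1}`. Hence `η̂ = 0` when `n_T(i₀) ≥ 2`, and `η̂ = -∏_{j ≠ i₀} p_j^{n_T(j)} ≥ -1`
when `n_T(i₀) = 1`, with equality only if `p_j = 1` for every other degree `j ∈ D(T)`. As `p` is a
probability distribution, at most one such `j` exists. Counting vertices (`|T| = ∑ n_T(i)`) and
edges (`|T| - 1 = ∑ i n_T(i)`) then gives `i₀ + j n_T(j) = n_T(j)`, which leaves only the single
vertex, the path (`j = 1`, `i₀ = 0`) and the star (`j = 0`, `i₀ = |T| - 1`).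
-/

inductive PTree : Type where
  | node : List PTree → PTree

namespace PTree

/-- The number of vertices of a rooted plane tree. -/
def size : PTree → ℕ
  | node ts => 1 + (ts.attach.map (fun x => size x.1)).sum
decreasing_by
  simp only [PTree.node.sizeOf_spec]
  have := List.sizeOf_lt_of_mem x.2
  omega

/-- `degCount i T` is the number of vertices of `T` with exactly `i` children. -/
def degCount (i : ℕ) : PTree → ℕ
  | node ts => (if ts.length = i then 1 else 0) + (ts.attach.map (fun x => degCount i x.1)).sum
decreasing_by
  simp only [PTree.node.sizeOf_spec]
  have := List.sizeOf_lt_of_mem x.2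
  omega

end PTree
/-- `piP p T = ∏_i p_i ^ n_T(i)`, the Galton--Watson probability of the plane tree `T`
under offspring distribution `p`.  (All out-degrees of `T` are `< T.size`.) -/
noncomputable def piP (p : ℕ → ℝ) (T : PTree) : ℝ :=
  ∏ i ∈ Finset.range T.size, p i ^ T.degCount i
/-- The set `D(T)` of out-degrees occurring in `T`, as a finset. -/
def degSet (T : PTree) : Finset ℕ := (Finset.range T.size).filter (fun i => T.degCount i ≠ 0)

/-- `etaHat p T = -∑_{i ∈ D(T)} n_T(i)^2 ∏_{j ∈ D(T)} p_j ^ (n_T(j) - δ_{ij})`. -/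
noncomputable def etaHat (p : ℕ → ℝ) (T : PTree) : ℝ :=
  - ∑ i ∈ degSet T, (T.degCount i : ℝ) ^ 2 *
      ∏ j ∈ degSet T, p j ^ (T.degCount j - (if i = j then 1 else 0))

/-- `gammaHat p T = 1 + etaHat p T`. -/
noncomputable def gammaHat (p : ℕ → ℝ) (T : PTree) : ℝ := 1 + etaHat p T
/-- `T` is a path: every vertex has at most one child. -/
def IsPath (T : PTree) : Prop := ∀ i, 2 ≤ i → T.degCount i = 0

/-- `T` is a star: a root of degree `d ≥ 1` joined to `d` leaves. -/
def IsStar (T : PTree) : Prop :=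
  ∃ d : ℕ, 1 ≤ d ∧ T = PTree.node (List.replicate d (PTree.node []))

open Finset

theorem eq_of_hasSum_one_of_apply_eq_one {ι : Type*} {p : ι → ℝ} (hp0 : ∀ i, 0 ≤ p i)
    (hp1 : HasSum p 1) {j k : ι} (hj : p j = 1) (hk : p k = 1) : j = k := by
  classical
  by_contra hjk
  have := sum_le_hasSum {j, k} (fun i _ => hp0 i) hp1
  rw [sum_pair hjk, hj, hk] at this
  norm_num at this

theorem Finset.prod_pow_lt_one_of_mem {ι : Type*} {s : Finset ι} {f : ι → ℝ} {n : ι → ℕ}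
    (h0 : ∀ i ∈ s, 0 ≤ f i) (h1 : ∀ i ∈ s, f i ≤ 1) {j : ι} (hj : j ∈ s) (hfj : f j < 1)
    (hn : n j ≠ 0) : ∏ i ∈ s, f i ^ n i < 1 :=
  calc ∏ i ∈ s, f i ^ n i ≤ ∏ i ∈ {j}, f i ^ n i :=
        prod_le_prod_of_subset_of_le_one (singleton_subset_iff.mpr hj)
          (fun i hi => pow_nonneg (h0 i hi) _) fun i hi _ => pow_le_one₀ (h0 i hi) (h1 i hi)
    _ < 1 := by
      rw [prod_singleton]
      exact pow_lt_one₀ (h0 j hj) hfj hn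

namespace PTree

@[induction_eliminator]
theorem induction_node {motive : PTree → Prop}
    (node : ∀ ts : List PTree, (∀ t ∈ ts, motive t) → motive (PTree.node ts)) : ∀ T, motive T
  | .node ts => node ts fun t _ => induction_node node t
decreasing_by
  simp only [PTree.node.sizeOf_spec]
  have := List.sizeOf_lt_of_mem ‹t ∈ ts›
  omega

theorem size_node (ts : List PTree) : (node ts).size = 1 + (ts.map size).sum := by
  rw [size]; simp

theorem degCount_node (i : ℕ) (ts : List PTree) :
    (node ts).degCount i = (if ts.length = i then 1 else 0) + (ts.map (degCount i)).sum := by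
  rw [degCount]; simp

theorem size_pos (T : PTree) : 0 < T.size := by
  cases T with | node ts => rw [size_node]; omega

theorem length_lt_size (ts : List PTree) : ts.length < (node ts).size := by
  have : ts.length ≤ (ts.map size).sum := by
    simpa using List.length_le_sum_of_one_le _ (List.forall_mem_map.mpr fun t _ => size_pos t)
  rw [size_node]; omega

theorem size_lt_of_mem {t : PTree} {ts : List PTree} (h : t ∈ ts) : t.size < (node ts).size := by
  have := List.single_le_sum (fun _ _ => Nat.zero_le _) _ (List.mem_map_of_mem (f := size) h)
  rw [size_node]; omega

theorem degCount_le_of_mem {t : PTree} {ts : List PTree} (h : t ∈ ts) (i : ℕ) :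
    t.degCount i ≤ (node ts).degCount i := by
  have := List.single_le_sum (fun _ _ => Nat.zero_le _) _ (List.mem_map_of_mem (f := degCount i) h)
  rw [degCount_node]; omega

theorem degCount_length_ne_zero (ts : List PTree) : (node ts).degCount ts.length ≠ 0 := by
  simp [degCount_node]

theorem degCount_eq_zero_of_size_le {T : PTree} {i : ℕ} (h : T.size ≤ i) : T.degCount i = 0 := by
  induction T with
  | node ts ih =>
    have hlen := length_lt_size ts
    rw [degCount_node, if_neg (by omega), zero_add, List.sum_eq_zero]
    simp only [List.mem_map]
    rintro _ ⟨t, ht, rfl⟩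
    exact ih t ht (by have := size_lt_of_mem ht; omega)

theorem sum_range_mul_degCount_node (f : ℕ → ℕ) {ts : List PTree} {N : ℕ} (h : ts.length < N) :
    ∑ i ∈ range N, f i * (node ts).degCount i =
      f ts.length + (ts.map fun t => ∑ i ∈ range N, f i * t.degCount i).sum := by
  simp only [degCount_node, mul_add, mul_ite, mul_one, mul_zero, sum_add_distrib,
    sum_ite_eq, mem_range, h, if_true, add_right_inj]
  clear h
  induction ts with
  | nil => simp
  | cons t ts ih => simp [sum_add_distrib, mul_add, ih]

theorem sum_range_degCount {T : PTree} {N : ℕ} (h : T.size ≤ N) :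
    ∑ i ∈ range N, T.degCount i = T.size := by
  induction T with
  | node ts ih =>
    have hN := (length_lt_size ts).trans_le h
    have key := sum_range_mul_degCount_node (fun _ => 1) hN
    simp only [one_mul] at key
    rw [key, size_node, List.map_congr_left fun t ht => ih t ht ((size_lt_of_mem ht).le.trans h)]

theorem sum_range_mul_degCount {T : PTree} {N : ℕ} (h : T.size ≤ N) :
    ∑ i ∈ range N, i * T.degCount i + 1 = T.size := by
  induction T with
  | node ts ih =>
    have hN := (length_lt_size ts).trans_le h
    have hsize : (ts.map size).sum = (ts.map fun t => ∑ i ∈ range N, i * t.degCount i + 1).sum :=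
      congrArg List.sum <| List.map_congr_left fun t ht =>
        (ih t ht ((size_lt_of_mem ht).le.trans h)).symm
    rw [sum_range_mul_degCount_node (fun i => i) hN, size_node, hsize, List.sum_map_add]
    simp only [List.map_const', List.sum_replicate, smul_eq_mul, mul_one]
    omega

end PTree

open PTree

theorem mem_degSet {T : PTree} {i : ℕ} : i ∈ degSet T ↔ T.degCount i ≠ 0 := by
  refine ⟨fun h => (mem_filter.mp h).2, fun h => mem_filter.mpr ⟨mem_range.mpr ?_, h⟩⟩
  by_contra hi
  exact h (degCount_eq_zero_of_size_le (not_lt.mp hi))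

theorem sum_mul_degCount_eq_of_degSet_subset (f : ℕ → ℕ) {T : PTree} {s t : Finset ℕ}
    (hs : degSet T ⊆ s) (ht : degSet T ⊆ t) :
    ∑ i ∈ s, f i * T.degCount i = ∑ i ∈ t, f i * T.degCount i := by
  have (u : Finset ℕ) (hu : degSet T ⊆ u) :
      ∑ i ∈ degSet T, f i * T.degCount i = ∑ i ∈ u, f i * T.degCount i :=
    sum_subset hu fun i _ hi => by rw [mem_degSet, not_not] at hi; simp [hi]
  rw [← this s hs, this t ht]

theorem sum_degCount_of_degSet_subset {T : PTree} {s : Finset ℕ} (hs : degSet T ⊆ s) :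
    ∑ i ∈ s, T.degCount i = T.size := by
  simpa using (sum_mul_degCount_eq_of_degSet_subset 1 hs (filter_subset _ _)).trans
    (by simpa using sum_range_degCount le_rfl)

theorem sum_mul_degCount_of_degSet_subset {T : PTree} {s : Finset ℕ} (hs : degSet T ⊆ s) :
    ∑ i ∈ s, i * T.degCount i + 1 = T.size := by
  rw [sum_mul_degCount_eq_of_degSet_subset (fun i => i) hs (filter_subset _ _)]
  exact sum_range_mul_degCount le_rfl

theorem isStar_of_degSet_subset {T : PTree} (h : T.size ≠ 1) (hD : degSet T ⊆ {0, T.size - 1}) :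
    IsStar T := by
  obtain ⟨ts⟩ := T
  have hdeg {i : ℕ} (hi : (node ts).degCount i ≠ 0) : i = 0 ∨ i = (node ts).size - 1 := by
    simpa using hD (mem_degSet.mpr hi)
  have hroot : ts.length ≠ 0 := by
    rintro hts
    simp [List.eq_nil_of_length_eq_zero hts, size_node] at h
  refine ⟨ts.length, by omega, congrArg node (List.eq_replicate_iff.mpr ⟨rfl, ?_⟩)⟩
  rintro ⟨cs⟩ hcs
  have hcs_deg : (node ts).degCount cs.length ≠ 0 :=
    fun h0 => degCount_length_ne_zero cs (Nat.le_zero.mp (h0 ▸ degCount_le_of_mem hcs _))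
  have := length_lt_size cs
  have := size_lt_of_mem hcs
  have hleaf : cs.length = 0 := (hdeg hcs_deg).resolve_right (by omega)
  rw [List.eq_nil_of_length_eq_zero hleaf]

theorem isPath_or_isStar_of_degSet_subset_pair {T : PTree} {i j : ℕ} (hi : T.degCount i = 1)
    (hj : T.degCount j ≠ 0) (hij : i ≠ j) (hD : degSet T ⊆ {i, j}) :
    (j = 1 ∧ IsPath T) ∨ (j = 0 ∧ IsStar T) := by
  have hvert := sum_degCount_of_degSet_subset hD
  have hedge := sum_mul_degCount_of_degSet_subset hD
  rw [sum_pair hij] at hvert hedge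
  rw [hi] at hvert hedge
  have hbal : i + j * T.degCount j = T.degCount j := by omega
  obtain hj0 | hj1 | hj2 : j = 0 ∨ j = 1 ∨ 2 ≤ j := by omega
  · subst hj0
    refine .inr ⟨rfl, isStar_of_degSet_subset (by omega) ?_⟩
    rw [show T.size - 1 = i by omega, pair_comm]
    exact hD
  · subst hj1
    refine .inl ⟨rfl, fun k hk => ?_⟩
    by_contra hk0
    have := hD (mem_degSet.mpr hk0)
    simp only [mem_insert, mem_singleton] at this
    omega
  · have := Nat.mul_le_mul_right (T.degCount j) hj2
    omega

theorem size_eq_one_or_isPath_or_isStar {p : ℕ → ℝ} (hp0 : ∀ i, 0 ≤ p i) (hp1 : HasSum p 1)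
    {T : PTree} {i : ℕ} (hi : T.degCount i = 1) (hone : ∀ j ∈ degSet T, j ≠ i → p j = 1) :
    T.size = 1 ∨ (IsPath T ∧ p 1 = 1) ∨ (IsStar T ∧ p 0 = 1) := by
  by_cases hj : ∃ j ∈ degSet T, j ≠ i
  · obtain ⟨j, hjD, hji⟩ := hj
    have hD : degSet T ⊆ {i, j} := fun k hk => by
      by_cases hki : k = i
      · simp [hki]
      · simp [eq_of_hasSum_one_of_apply_eq_one hp0 hp1 (hone k hk hki) (hone j hjD hji)]
    rcases isPath_or_isStar_of_degSet_subset_pair hi (mem_degSet.mp hjD) (Ne.symm hji) hD with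
      ⟨rfl, hpath⟩ | ⟨rfl, hstar⟩
    · exact .inr (.inl ⟨hpath, hone _ hjD hji⟩)
    · exact .inr (.inr ⟨hstar, hone _ hjD hji⟩)
  · push Not at hj
    left
    rw [← sum_degCount_of_degSet_subset (s := {i}) fun k hk => mem_singleton.mpr (hj k hk),
      sum_singleton, hi]

theorem piP_eq_zero_iff {p : ℕ → ℝ} {T : PTree} : piP p T = 0 ↔ ∃ i ∈ degSet T, p i = 0 := by
  simp only [piP, prod_eq_zero_iff, pow_eq_zero_iff', degSet, mem_filter]
  grind

theorem etaHat_eq_of_apply_eq_zero {p : ℕ → ℝ} {T : PTree} {i : ℕ} (hi : i ∈ degSet T)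
    (hp : p i = 0) :
    etaHat p T = -((T.degCount i : ℝ) ^ 2 * p i ^ (T.degCount i - 1) *
      ∏ j ∈ (degSet T).erase i, p j ^ T.degCount j) := by
  rw [etaHat, sum_eq_single_of_mem i hi, ← mul_prod_erase _ _ hi, if_pos rfl, mul_assoc]
  · congr 3
    refine prod_congr rfl fun j hj => ?_
    rw [if_neg (ne_of_mem_erase hj).symm, Nat.sub_zero]
  · intro k _ hki
    refine mul_eq_zero_of_right _ (prod_eq_zero hi ?_)
    rw [if_neg hki, Nat.sub_zero, hp, zero_pow (mem_degSet.mp hi)]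

theorem stmt_12_general (p : ℕ → ℝ) (hp0 : ∀ i, 0 ≤ p i) (hp1 : HasSum p 1)
    (T : PTree) (hpi : piP p T = 0)
    (h1 : T.size ≠ 1) (h2 : ¬ (IsPath T ∧ p 1 = 1)) (h3 : ¬ (IsStar T ∧ p 0 = 1)) :
    0 < gammaHat p T := by
  obtain ⟨i, hi, hpi0⟩ := piP_eq_zero_iff.mp hpi
  rw [gammaHat, etaHat_eq_of_apply_eq_zero hi hpi0]
  obtain hn | hn : 2 ≤ T.degCount i ∨ T.degCount i = 1 := by
    have := mem_degSet.mp hi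
    omega
  · simp [hpi0, zero_pow (by omega : T.degCount i - 1 ≠ 0)]
  · suffices ∏ j ∈ (degSet T).erase i, p j ^ T.degCount j < 1 by simpa [hn]
    have hle (j : ℕ) : p j ≤ 1 := le_hasSum hp1 j fun k _ => hp0 k
    by_contra hprod
    have hone : ∀ j ∈ degSet T, j ≠ i → p j = 1 := fun j hj hji => by
      by_contra hpj
      exact hprod <| prod_pow_lt_one_of_mem (fun k _ => hp0 k) (fun k _ => hle k)
        (mem_erase.mpr ⟨hji, hj⟩) ((hle j).lt_of_ne hpj) (mem_degSet.mp hj)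
    rcases size_eq_one_or_isPath_or_isStar hp0 hp1 hn hone with h | h | h
    exacts [h1 h, h2 h, h3 h]

/-- If `p` is a probability distribution on `ℕ` with mean `≤ 1` and `T` is a plane tree with
`π_p(T) = 0`, then `γ̂_p(T,T) = 1 + η̂_p(T,T) > 0` unless `|T| = 1`, or `T` is a path and
`p₁ = 1`, or `T` is a star and `p₀ = 1`. -/
theorem stmt_12 (p : ℕ → ℝ) (hp0 : ∀ i, 0 ≤ p i) (hp1 : HasSum p 1)
    (hmean : ∑' i : ℕ, (i : ℝ) * p i ≤ 1)
    (T : PTree) (hpi : piP p T = 0)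
    (h1 : T.size ≠ 1) (h2 : ¬ (IsPath T ∧ p 1 = 1)) (h3 : ¬ (IsStar T ∧ p 0 = 1)) :
    0 < gammaHat p T :=
  stmt_12_general p hp0 hp1 T hpi h1 h2 h3
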